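/- For any nonempty multisegment M in MS_n there exists an index k with 1 ≤ k ≤ n such that e_k(M) ≠ 0. Consequently, the empty multisegment can be reached from any M ∈ MS_n by applying finitely many crystal raising operators e_i, and (MS_n, e_i, f_i) is a highest weight crystal with highest weight element the empty multisegment. -/

import Mathlib

/-- A segment `[a,b]` is a pair of integers. -/
abbrev Seg : Type := ℕ × ℕ

/-- A multisegment is a finite multiset of segments. -/
abbrev MS : Type := Multiset Seg

/-- `M ∈ MS_n`: all segments `[a,b]` satisfy `1 ≤ a ≤ b ≤ n`. -/
def IsMS (n : ℕ) (M : MS) : Prop := ∀ s ∈ M, 1 ≤ s.1 ∧ s.1 ≤ s.2 ∧ s.2 ≤ n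

/-- A bracket: `op` = "(", `cl` = ")". -/
inductive Br | op | cl
deriving DecidableEq

/-- One step of the left-to-right bracket cancellation procedure.  The state
`(cls, ops)` records the tags of the currently uncanceled ")" (in order) and the
currently uncanceled "(" (in order).  A new "(" is appended to `ops`; a new ")"
cancels the last uncanceled "(" if there is one, and otherwise is appended to `cls`. -/
def step {τ : Type} : (List τ × List τ) → (Br × τ) → (List τ × List τ)
  | (cls, ops), (Br.op, s) => (cls, ops ++ [s])
  | (cls, ops), (Br.cl, s) => if ops.isEmpty then (cls ++ [s], ops) else (cls, ops.dropLast)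

/-- Process a tagged bracket string; the result `(cls, ops)` lists the tags of the
uncanceled ")" and the uncanceled "(" (left to right).  The reduced (uncanceled)
string is `")"^cls.length ++ "("^ops.length`. -/
def scan {τ : Type} (l : List (Br × τ)) : List τ × List τ := l.foldl step ([], [])

/-- Number of uncanceled ")" in a tagged bracket string. -/
def urStr {τ : Type} (l : List (Br × τ)) : ℕ := (scan l).1.length

/-- Number of uncanceled "(" in a tagged bracket string. -/
def epsStr {τ : Type} (l : List (Br × τ)) : ℕ := (scan l).2.length

/-- Tag of the rightmost uncanceled ")", if any. -/
def lastCl {τ : Type} (l : List (Br × τ)) : Option τ := (scan l).1.getLast?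

/-- Tag of the leftmost uncanceled "(", if any. -/
def headOp {τ : Type} (l : List (Br × τ)) : Option τ := (scan l).2.head?

/-- The string `S_i(M)`: segments are ordered by increasing height, then by
decreasing lower endpoint; each `[h,i]` contributes "(" and each `[h,i-1]`
contributes ")".  In the block of segments of height `t` the "(" over the
`[i-t+1, i]` segments come immediately before the ")" over the `[i-t, i-1]`
segments, and blocks appear for `t = 1, 2, …`. -/
def Si (M : MS) (i : ℕ) : List (Br × Seg) :=
  (List.range i).flatMap fun t0 =>
    let t := t0 + 1
    List.replicate (M.count (i - t + 1, i)) (Br.op, ((i - t + 1 : ℕ), i)) ++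
    List.replicate (M.count (i - t, i - 1)) (Br.cl, ((i - t : ℕ), i - 1))

/-- The string `S_i^*(M)`: segments ordered by increasing height, then by
increasing lower endpoint; each `[i,j]` contributes "(" and each `[i+1,j]`
contributes ")".  In the block of height `t` the "(" below the `[i, i+t-1]`
segments come immediately before the ")" below the `[i+1, i+t]` segments. -/
def SiStar (n : ℕ) (M : MS) (i : ℕ) : List (Br × Seg) :=
  (List.range n).flatMap fun t0 =>
    let t := t0 + 1
    List.replicate (M.count (i, i + t - 1)) (Br.op, (i, i + t - 1)) ++
    List.replicate (M.count (i + 1, i + t)) (Br.cl, (i + 1, i + t))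

/-- The crystal operator `f_i` on multisegments: it changes the segment `[h,i-1]`
under the rightmost uncanceled ")" of `S_i(M)` into `[h,i]`, or adds a new
segment `[i,i]` if there is no uncanceled ")". -/
def fM (i : ℕ) (M : MS) : MS :=
  match lastCl (Si M i) with
  | some s => M.erase s + {(s.1, i)}
  | none => M + {(i, i)}

/-- The crystal operator `e_i` on multisegments: it changes the segment `[h,i]`
under the leftmost uncanceled "(" of `S_i(M)` into `[h,i-1]` (deleting it when
`h = i`), or returns `none` (i.e. `0`) if there is no uncanceled "(". -/
def eM (i : ℕ) (M : MS) : Option MS :=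
  match headOp (Si M i) with
  | some s => some (if s.1 = i then M.erase s else M.erase s + {(s.1, i - 1)})
  | none => none

/-- The operator `f_i^*`: it changes the segment `[i+1,j]` under the rightmost
uncanceled ")" of `S_i^*(M)` into `[i,j]`, or adds `[i,i]` if there is none. -/
def fMStar (n i : ℕ) (M : MS) : MS :=
  match lastCl (SiStar n M i) with
  | some s => M.erase s + {(i, s.2)}
  | none => M + {(i, i)}

/-- The operator `e_i^*`: it changes the segment `[i,j]` under the leftmost
uncanceled "(" of `S_i^*(M)` into `[i+1,j]` (deleting it when `j = i`), or
returns `none` if there is no uncanceled "(". -/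
def eMStar (n i : ℕ) (M : MS) : Option MS :=
  match headOp (SiStar n M i) with
  | some s => some (if s.2 = i then M.erase s else M.erase s + {(i + 1, s.2)})
  | none => none

/-- The number of boxes labeled `j` in `M`: each segment `[a,b]` contains one
box labeled `j` for each `a ≤ j ≤ b`. -/
def boxes (M : MS) (j : ℕ) : ℕ :=
  (M.filter (fun s => s.1 ≤ j ∧ j ≤ s.2)).card

/-- The pairing `⟨wt(M), α_i^∨⟩ = #(boxes i-1) + #(boxes i+1) - 2 #(boxes i)`. -/
def wtPair (M : MS) (i : ℕ) : ℤ :=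
  (boxes M (i - 1) : ℤ) + (boxes M (i + 1) : ℤ) - 2 * (boxes M i : ℤ)


/-- Apply the raising operators `e_k` along a list of indices. -/
def eChain : List ℕ → MS → Option MS
  | [], M => some M
  | k :: l, M => (eM k M).bind (eChain l)


/-! Take the segment `[a,b]` that comes last in the ordering: it has maximal height and, among those,
minimal lower endpoint. Then it contributes the last letter of `S_b(M)`: no segment is higher, and
`[a-1,b-1]`, whose ")" would follow, has the same height and a smaller lower endpoint. A string
ending in "(" has an uncanceled "(", so `e_b(M) ≠ 0`. Each `e_i` removes one box, so iterating
raising operators empties `M`. -/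

section Brackets

variable {τ : Type}

lemma scan_append_op (l : List (Br × τ)) (s : τ) :
    scan (l ++ [(Br.op, s)]) = ((scan l).1, (scan l).2 ++ [s]) := by
  simp only [scan, List.foldl_append, List.foldl_cons, List.foldl_nil]
  rfl

lemma headOp_append_op_ne_none (l : List (Br × τ)) (s : τ) :
    headOp (l ++ [(Br.op, s)]) ≠ none := by
  simp [headOp, scan_append_op]

lemma mem_step_snd {st : List τ × List τ} {p : Br × τ} {x : τ} (hx : x ∈ (step st p).2) :
    x ∈ st.2 ∨ p = (Br.op, x) := by
  obtain ⟨cls, ops⟩ := st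
  obtain ⟨_ | _, s⟩ := p
  · simpa [step, eq_comm] using hx
  · simp only [step] at hx
    split at hx
    · exact Or.inl hx
    · exact Or.inl (List.mem_of_mem_dropLast hx)

lemma mem_foldl_step_snd {l : List (Br × τ)} {st : List τ × List τ} {x : τ}
    (hx : x ∈ (l.foldl step st).2) : x ∈ st.2 ∨ (Br.op, x) ∈ l := by
  induction l generalizing st with
  | nil => exact Or.inl hx
  | cons p l ih =>
    rcases ih hx with hst | hl
    · rcases mem_step_snd hst with h | rfl
      · exact Or.inl h
      · exact Or.inr List.mem_cons_self
    · exact Or.inr (List.mem_cons_of_mem p hl)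

lemma op_mem_of_headOp_eq_some {l : List (Br × τ)} {s : τ} (h : headOp l = some s) :
    (Br.op, s) ∈ l := by
  have hs : s ∈ (scan l).2 := List.mem_of_mem_head? h
  simpa using mem_foldl_step_snd hs

end Brackets

lemma List.flatMap_range_eq_of_eq_nil {α : Type} {f : ℕ → List α} {m k : ℕ} (hmk : m ≤ k)
    (hf : ∀ t, m ≤ t → t < k → f t = []) :
    (List.range k).flatMap f = (List.range m).flatMap f := by
  induction k, hmk using Nat.le_induction with
  | base => rfl
  | succ k hmk ih =>
    rw [List.range_succ, List.flatMap_append, ih (fun t h1 h2 => hf t h1 (by omega)),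
      List.flatMap_singleton, hf k hmk (by omega), List.append_nil]

lemma op_mem_Si {M : MS} {i : ℕ} {s : Seg} (h : (Br.op, s) ∈ Si M i) :
    s ∈ M ∧ s.1 ≤ i ∧ s.2 = i := by
  simp only [Si, List.mem_flatMap, List.mem_range, List.mem_append, List.mem_replicate,
    Prod.ext_iff, reduceCtorEq, false_and, and_false, or_false] at h
  obtain ⟨t, ht, hc, -, h1, h2⟩ := h
  have hs : s = (i - (t + 1) + 1, i) := Prod.ext h1 h2
  subst hs
  exact ⟨Multiset.count_ne_zero.1 hc, by omega, rfl⟩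

/-- `S_i(M)` lists segments in increasing order of this key. -/
def segKey (s : Seg) : ℕ ×ₗ ℕᵒᵈ := toLex (s.2 - s.1, OrderDual.toDual s.1)

lemma segKey_le_segKey {x s : Seg} :
    segKey x ≤ segKey s ↔ x.2 - x.1 < s.2 - s.1 ∨ x.2 - x.1 = s.2 - s.1 ∧ s.1 ≤ x.1 :=
  Prod.Lex.toLex_le_toLex.trans (by rw [OrderDual.toDual_le_toDual])

lemma Si_eq_append_op {M : MS} {s : Seg} (hpos : ∀ x ∈ M, 1 ≤ x.1) (hs : s ∈ M)
    (hle : s.1 ≤ s.2) (hlast : ∀ x ∈ M, segKey x ≤ segKey s) :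
    ∃ l, Si M s.2 = l ++ [(Br.op, s)] := by
  obtain ⟨a, b⟩ := s
  simp only [segKey_le_segKey] at hlast
  have hcount : ∀ x, (1 ≤ x.1 → b - a < x.2 - x.1 ∨ x.2 - x.1 = b - a ∧ x.1 < a) →
      M.count x = 0 := fun x hx => Multiset.count_eq_zero.2 fun hmem => by
    have := hpos x hmem
    rcases hlast x hmem with h | ⟨h, h'⟩ <;> omega
  have hblock : ∀ t, b - a + 1 ≤ t → t < b →
      List.replicate (M.count (b - (t + 1) + 1, b)) (Br.op, (b - (t + 1) + 1, b)) ++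
      List.replicate (M.count (b - (t + 1), b - 1)) (Br.cl, (b - (t + 1), b - 1)) = [] := by
    intro t h1 h2
    rw [hcount _ (by dsimp only; omega), hcount _ (by dsimp only; omega)]
    rfl
  obtain ⟨c, hc⟩ := Nat.exists_eq_add_one.2 (Multiset.count_pos.2 hs)
  have ha1 : 1 ≤ a := hpos _ hs
  have ha : b - (b - a + 1) + 1 = a := by omega
  have ha' : b - (b - a + 1) = a - 1 := by omega
  rw [Si, List.flatMap_range_eq_of_eq_nil (by omega) hblock, List.range_succ, List.flatMap_append,
    List.flatMap_singleton, ha, ha', hc, hcount (a - 1, b - 1) (by dsimp only; omega),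
    List.replicate_zero, List.append_nil, List.replicate_succ', ← List.append_assoc]
  exact ⟨_, rfl⟩

lemma eM_ne_none_of_headOp_ne_none {i : ℕ} {M : MS} (h : headOp (Si M i) ≠ none) :
    eM i M ≠ none := by
  obtain ⟨s, hs⟩ := Option.ne_none_iff_exists'.1 h
  simp [eM, hs]

lemma exists_of_eM_eq_some {i : ℕ} {M M' : MS} (h : eM i M = some M') :
    ∃ s ∈ M, s.1 ≤ i ∧ s.2 = i ∧
      M' = if s.1 = i then M.erase s else M.erase s + {(s.1, i - 1)} := by
  unfold eM at h
  split at h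
  · next s hs =>
    obtain ⟨hsM, hle, hi⟩ := op_mem_Si (op_mem_of_headOp_eq_some hs)
    exact ⟨s, hsM, hle, hi, (Option.some_injective _ h).symm⟩
  · exact absurd h (Option.some_ne_none _).symm

lemma IsMS.of_eM {n i : ℕ} {M M' : MS} (hM : IsMS n M) (h : eM i M = some M') : IsMS n M' := by
  obtain ⟨s, hsM, -, rfl, rfl⟩ := exists_of_eM_eq_some h
  have hs := hM s hsM
  split_ifs with hi
  · exact fun x hx => hM x (Multiset.mem_of_mem_erase hx)
  · intro x hx
    rcases Multiset.mem_add.1 hx with hx | hx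
    · exact hM x (Multiset.mem_of_mem_erase hx)
    · rw [Multiset.mem_singleton.1 hx]
      omega

def numBoxes (M : MS) : ℕ := (M.map fun s => s.2 + 1 - s.1).sum

lemma numBoxes_eq_erase_add {M : MS} {s : Seg} (hs : s ∈ M) :
    numBoxes M = numBoxes (M.erase s) + (s.2 + 1 - s.1) := by
  conv_lhs => rw [← Multiset.cons_erase hs]
  simp [numBoxes, add_comm]

lemma numBoxes_add_singleton (M : MS) (s : Seg) :
    numBoxes (M + {s}) = numBoxes M + (s.2 + 1 - s.1) := by
  simp [numBoxes]

lemma numBoxes_lt_of_eM {i : ℕ} {M M' : MS} (h : eM i M = some M') :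
    numBoxes M' < numBoxes M := by
  obtain ⟨s, hsM, hle, rfl, rfl⟩ := exists_of_eM_eq_some h
  have hM := numBoxes_eq_erase_add hsM
  split_ifs
  · omega
  · rw [numBoxes_add_singleton]
    dsimp only
    omega

lemma exists_eM_ne_none {n : ℕ} {M : MS} (hM : IsMS n M) (h0 : M ≠ 0) :
    ∃ k, 1 ≤ k ∧ k ≤ n ∧ eM k M ≠ none := by
  obtain ⟨s, hs, hlast⟩ := Multiset.exists_max_image segKey h0
  obtain ⟨h1, hle, hn⟩ := hM s hs
  obtain ⟨l, hl⟩ := Si_eq_append_op (fun x hx => (hM x hx).1) hs hle hlast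
  refine ⟨s.2, by omega, hn, eM_ne_none_of_headOp_ne_none ?_⟩
  rw [hl]
  exact headOp_append_op_ne_none l s

lemma exists_eChain_eq_zero {n : ℕ} {M : MS} (hM : IsMS n M) :
    ∃ l : List ℕ, (∀ k ∈ l, 1 ≤ k ∧ k ≤ n) ∧ eChain l M = some 0 := by
  induction hN : numBoxes M using Nat.strong_induction_on generalizing M with
  | _ N ih =>
  rcases eq_or_ne M 0 with rfl | h0
  · exact ⟨[], by simp, rfl⟩
  obtain ⟨k, hk1, hkn, hk⟩ := exists_eM_ne_none hM h0
  obtain ⟨M', hM'⟩ := Option.ne_none_iff_exists'.1 hk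
  obtain ⟨l, hl, hchain⟩ := ih _ (hN ▸ numBoxes_lt_of_eM hM') (hM.of_eM hM') rfl
  exact ⟨k :: l, List.forall_mem_cons.2 ⟨⟨hk1, hkn⟩, hl⟩, by simp [eChain, hM', hchain]⟩

theorem stmt5 (n : ℕ) :
    (∀ M : MS, IsMS n M → M ≠ 0 → ∃ k, 1 ≤ k ∧ k ≤ n ∧ eM k M ≠ none) ∧
    (∀ M : MS, IsMS n M →
      ∃ l : List ℕ, (∀ k ∈ l, 1 ≤ k ∧ k ≤ n) ∧ eChain l M = some (0 : MS)) :=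
  ⟨fun _ hM h0 => exists_eM_ne_none hM h0, fun _ hM => exists_eChain_eq_zero hM⟩
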